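/- For all groves A, B, C of planar binary trees of positive degree, the dendriform relations hold: (A ⊣ B) ⊣ C = A ⊣ (B + C), (A ⊢ B) ⊣ C = A ⊢ (B ⊣ C), and (A + B) ⊢ C = A ⊢ (B ⊢ C). -/

import Mathlib

/-- A planar binary tree: a leaf `|` or a grafting `x ∨ y`. -/
inductive PBT : Type
  | leaf : PBT
  | node : PBT → PBT → PBT
  deriving DecidableEq

namespace PBT

/-- The degree: number of internal vertices. -/
def deg : PBT → ℕ
  | leaf => 0
  | node l r => deg l + deg r + 1

/-- The set `Y n` of planar binary trees of degree `n`. -/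
def Y (n : ℕ) : Set PBT := {t | t.deg = n}

/-- The `over` operation `x / y`. -/
def pover : PBT → PBT → PBT
  | x, leaf => x
  | x, node yl yr => node (pover x yl) yr

/-- The `under` operation `x \ y`. -/
def under : PBT → PBT → PBT
  | leaf, y => y
  | node xl xr, y => node xl (under xr y)

/-- The Tamari order, generated by `(x ∨ y) ∨ z ≤ x ∨ (y ∨ z)` and compatibility
with grafting on both sides. -/
inductive tle : PBT → PBT → Prop
  | refl (x : PBT) : tle x x
  | trans {x y z : PBT} : tle x y → tle y z → tle x z
  | rotate (x y z : PBT) : tle (node (node x y) z) (node x (node y z))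
  | node_left {x y : PBT} (z : PBT) : tle x y → tle (node x z) (node y z)
  | node_right {x y : PBT} (z : PBT) : tle x y → tle (node z x) (node z y)

/-- The sum of two planar binary trees: the Tamari interval `[x/y, x\y]`
(a subset of `Y (deg x + deg y)`). -/
def sum (x y : PBT) : Set PBT := {z | tle (pover x y) z ∧ tle z (under x y)}

/-- A grove of degree `n`: a nonempty subset of `Y n`. -/
def Grove (n : ℕ) (A : Set PBT) : Prop := A.Nonempty ∧ ∀ x ∈ A, x.deg = n

/-- The sum of groves. -/
def gsum (A B : Set PBT) : Set PBT := ⋃ x ∈ A, ⋃ y ∈ B, sum x y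

/-- The reflection involution σ. -/
def σ : PBT → PBT
  | leaf => leaf
  | node l r => node (σ r) (σ l)

/-- The left sum `x ⊣ y` of trees (with the conventions `x ⊣ | = {x}`, `| ⊣ y = {|}`). -/
def lsum : PBT → PBT → Set PBT
  | x, leaf => {x}
  | leaf, _ => {leaf}
  | node xl xr, y => (fun z => node xl z) '' sum xr y

/-- The right sum `x ⊢ y` of trees (with the conventions `| ⊢ y = {y}`, `x ⊢ | = {|}`). -/
def rsum : PBT → PBT → Set PBT
  | leaf, y => {y}
  | _, leaf => {leaf}
  | x, node yl yr => (fun z => node z yr) '' sum x yl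

/-- Left sum of groves. -/
def glsum (A B : Set PBT) : Set PBT := ⋃ x ∈ A, ⋃ y ∈ B, lsum x y

/-- Right sum of groves. -/
def grsum (A B : Set PBT) : Set PBT := ⋃ x ∈ A, ⋃ y ∈ B, rsum x y

/-- Multiplication of a tree by a grove:
`| × B = {|}` and `(xˡ ∨ xʳ) × B = ((xˡ × B) ⊢ B) ⊣ (xʳ × B)`.
(The conventions `{|} ⊢ B = B` and `A ⊣ {|} = A` are built into `rsum`/`lsum`.) -/
def tmul : PBT → Set PBT → Set PBT
  | leaf, _ => {leaf}
  | node l r, B => glsum (grsum (tmul l B) B) (tmul r B)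

/-- Multiplication of groves. -/
def gmul (A B : Set PBT) : Set PBT := ⋃ x ∈ A, tmul x B

end PBT

/-!
For `x, y ≠ |` the interval `x + y = [x/y, x\y]` splits as `(x ⊣ y) ∪ (x ⊢ y)`. A tree
`zˡ ∨ zʳ` of the interval has `deg x ≤ deg zˡ` or `deg y ≤ deg zʳ`. In the first case, factoring
the lower bound through `zˡ / (| ∨ zʳ)` and the upper bound through `(zˡ ∨ |) \ zʳ` and comparing
degrees forces `y = yˡ ∨ zʳ` with `zˡ ∈ x + yˡ`; the second case is its mirror image under `σ`.
Unfolding one grafting, the first and third dendriform relations for trees reduce to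
associativity of `+` on smaller trees, the second holds outright, and the splitting turns the three
of them into associativity of `+` at the next size; so everything follows by one induction, and
passes to groves by taking unions.
-/

lemma Set.biUnion_biUnion_eq_of_forall {α β γ δ ε : Type*} {f : α → β → Set δ}
    {g : δ → γ → Set ε} {F : β → γ → Set δ} {G : α → δ → Set ε}
    {A : Set α} {B : Set β} {C : Set γ}
    (h : ∀ x ∈ A, ∀ y ∈ B, ∀ c ∈ C, ⋃ u ∈ f x y, g u c = ⋃ v ∈ F y c, G x v) :
    ⋃ u ∈ ⋃ x ∈ A, ⋃ y ∈ B, f x y, ⋃ c ∈ C, g u c =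
      ⋃ x ∈ A, ⋃ v ∈ ⋃ y ∈ B, ⋃ c ∈ C, F y c, G x v := by
  ext z
  simp only [Set.mem_iUnion, exists_prop]
  constructor
  · rintro ⟨u, ⟨x, hx, y, hy, hu⟩, c, hc, hz⟩
    have : z ∈ ⋃ v ∈ F y c, G x v := h x hx y hy c hc ▸ Set.mem_biUnion hu hz
    obtain ⟨v, hv, hz⟩ := Set.mem_iUnion₂.1 this
    exact ⟨x, hx, v, ⟨y, hy, c, hc, hv⟩, hz⟩
  · rintro ⟨x, hx, v, ⟨y, hy, c, hc, hv⟩, hz⟩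
    have : z ∈ ⋃ u ∈ f x y, g u c := (h x hx y hy c hc).symm ▸ Set.mem_biUnion hv hz
    obtain ⟨u, hu, hz⟩ := Set.mem_iUnion₂.1 this
    exact ⟨u, ⟨x, hx, y, hy, hu⟩, c, hc, hz⟩

namespace PBT

@[simp] lemma deg_eq_zero_iff {x : PBT} : x.deg = 0 ↔ x = leaf := by
  cases x <;> simp [deg]

lemma ne_leaf_of_deg_pos {x : PBT} (h : 0 < x.deg) : x ≠ leaf := by
  rintro rfl
  exact h.false

lemma tle.deg_eq {x y : PBT} (h : tle x y) : x.deg = y.deg := by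
  induction h with
  | refl => rfl
  | trans _ _ ih₁ ih₂ => exact ih₁.trans ih₂
  | rotate => simp only [deg]; omega
  | node_left _ _ ih | node_right _ _ ih => simp only [deg, ih]

/-- A rotation `(x ∨ y) ∨ z ≤ x ∨ (y ∨ z)` raises the weight by `deg z + 1`, so the weight is a
strict potential for `tle`. -/
def weight : PBT → ℕ
  | leaf => 0
  | node a b => weight a + weight b + deg b + 1

lemma tle.weight_le {x y : PBT} (h : tle x y) : weight x ≤ weight y := by
  induction h with
  | refl => exact le_rfl
  | trans _ _ ih₁ ih₂ => exact ih₁.trans ih₂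
  | rotate => simp only [weight, deg]; omega
  | node_left _ _ ih => simp only [weight]; omega
  | node_right _ h ih => simp only [weight, h.deg_eq]; omega

lemma tle.eq_of_weight_eq {x y : PBT} (h : tle x y) (hw : weight x = weight y) : x = y := by
  induction h with
  | refl => rfl
  | trans h₁ h₂ ih₁ ih₂ =>
    have := h₁.weight_le
    have := h₂.weight_le
    rw [ih₁ (by omega), ih₂ (by omega)]
  | rotate => simp only [weight, deg] at hw; omega
  | node_left _ _ ih => simp only [weight] at hw; rw [ih (by omega)]
  | node_right _ h ih => simp only [weight, h.deg_eq] at hw; rw [ih (by omega)]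

lemma tle.antisymm {x y : PBT} (h₁ : tle x y) (h₂ : tle y x) : x = y :=
  h₁.eq_of_weight_eq (h₁.weight_le.antisymm h₂.weight_le)

@[simp] lemma pover_leaf (x : PBT) : pover x leaf = x := rfl

@[simp] lemma leaf_pover (y : PBT) : pover leaf y = y := by
  induction y <;> simp_all [pover]

@[simp] lemma leaf_under (y : PBT) : under leaf y = y := rfl

@[simp] lemma under_leaf (x : PBT) : under x leaf = x := by
  induction x <;> simp_all [under]

@[simp] lemma deg_pover (x y : PBT) : deg (pover x y) = deg x + deg y := by
  induction y with
  | leaf => rfl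
  | node _ _ ih _ => simp only [pover, deg, ih]; omega

@[simp] lemma deg_under (x y : PBT) : deg (under x y) = deg x + deg y := by
  induction x with
  | leaf => simp [deg]
  | node _ _ _ ih => simp only [under, deg, ih]; omega

@[simp] lemma σ_σ (x : PBT) : σ (σ x) = x := by
  induction x <;> simp_all [σ]

lemma σ_injective : Function.Injective σ :=
  Function.LeftInverse.injective σ_σ

@[simp] lemma deg_σ (x : PBT) : deg (σ x) = deg x := by
  induction x with
  | leaf => rfl
  | node _ _ ih₁ ih₂ => simp only [σ, deg, ih₁, ih₂]; omega

lemma tle.σ {x y : PBT} (h : tle x y) : tle (σ y) (σ x) := by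
  induction h with
  | refl => exact .refl _
  | trans _ _ ih₁ ih₂ => exact ih₂.trans ih₁
  | rotate => exact .rotate _ _ _
  | node_left _ _ ih => exact .node_right _ ih
  | node_right _ _ ih => exact .node_left _ ih

@[simp] lemma σ_tle_σ_iff {x y : PBT} : tle (σ x) (σ y) ↔ tle y x :=
  ⟨fun h => by simpa using h.σ, tle.σ⟩

lemma σ_pover (x y : PBT) : σ (pover x y) = under (σ y) (σ x) := by
  induction y <;> simp_all [pover, σ, under]

lemma σ_under (x y : PBT) : σ (under x y) = pover (σ y) (σ x) := by
  induction x <;> simp_all [under, σ, pover]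

lemma exists_under_of_under_tle {a b v : PBT} (h : tle (under a b) v) :
    ∃ t s, v = under t s ∧ tle a t ∧ tle b s := by
  generalize hu : under a b = u at h
  induction h generalizing a b with
  | refl => exact ⟨a, b, hu.symm, .refl _, .refl _⟩
  | trans _ _ ih₁ ih₂ =>
    obtain ⟨t, s, rfl, hat, hbs⟩ := ih₁ hu
    obtain ⟨t', s', rfl, htt, hss⟩ := ih₂ rfl
    exact ⟨t', s', rfl, hat.trans htt, hbs.trans hss⟩
  | rotate p q r =>
    cases a with
    | leaf =>
      obtain rfl : b = _ := hu
      exact ⟨leaf, _, rfl, .refl _, .rotate p q r⟩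
    | node al ar =>
      obtain ⟨rfl, rfl⟩ := node.inj hu
      exact ⟨node p (node q ar), b, rfl, .rotate _ _ _, .refl _⟩
  | @node_left x y z h =>
    cases a with
    | leaf =>
      obtain rfl : b = _ := hu
      exact ⟨leaf, _, rfl, .refl _, .node_left z h⟩
    | node al ar =>
      obtain ⟨rfl, rfl⟩ := node.inj hu
      exact ⟨node y ar, b, rfl, .node_left _ h, .refl _⟩
  | node_right z h ih =>
    cases a with
    | leaf =>
      obtain rfl : b = _ := hu
      exact ⟨leaf, _, rfl, .refl _, .node_right z h⟩
    | node al ar =>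
      obtain ⟨rfl, hx⟩ := node.inj hu
      obtain ⟨t, s, rfl, hat, hbs⟩ := ih hx
      exact ⟨node al t, s, rfl, .node_right _ hat, hbs⟩

lemma exists_pover_of_tle_pover {u p q : PBT} (h : tle u (pover p q)) :
    ∃ c d, u = pover c d ∧ tle c p ∧ tle d q := by
  obtain ⟨t, s, hts, hqt, hps⟩ := exists_under_of_under_tle (σ_pover p q ▸ h.σ)
  refine ⟨σ s, σ t, ?_, by simpa using hps.σ, by simpa using hqt.σ⟩
  rw [← σ_under, ← hts, σ_σ]

lemma exists_under_of_under_eq_under {x y t s : PBT} (h : under x y = under t s)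
    (hdeg : deg x ≤ deg t) : ∃ w, t = under x w ∧ y = under w s := by
  induction x generalizing t with
  | leaf => exact ⟨t, rfl, h⟩
  | node a b _ ih =>
    cases t with
    | leaf => simp [deg] at hdeg
    | node tl tr =>
      obtain ⟨rfl, hb⟩ := node.inj h
      obtain ⟨w, rfl, rfl⟩ := ih hb (by simp only [deg] at hdeg; omega)
      exact ⟨w, rfl, rfl⟩

lemma exists_pover_of_pover_eq_pover {x y c d : PBT} (h : pover x y = pover c d)
    (hdeg : deg x ≤ deg c) : ∃ e, c = pover x e ∧ y = pover e d := by
  induction d generalizing y with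
  | leaf => exact ⟨y, h.symm, rfl⟩
  | node dl dr ih _ =>
    cases y with
    | leaf => have := congrArg deg h; simp [deg] at this; omega
    | node yl yr =>
      obtain ⟨hl, rfl⟩ := node.inj h
      obtain ⟨e, rfl, rfl⟩ := ih hl
      exact ⟨e, rfl, rfl⟩

lemma pover_eq_under_of_deg_eq {e d t s : PBT} (h : pover e d = under t s)
    (hdeg : deg d = deg s + 1) : d = node leaf s ∧ t = node e leaf := by
  have hdegs := congrArg deg h
  cases d with
  | leaf => simp [deg] at hdeg
  | node dl dr =>
    cases t with
    | leaf => simp [deg] at hdegs hdeg; omega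
    | node tl tr =>
      obtain ⟨rfl, hdr⟩ := node.inj h
      have := congrArg deg hdr
      simp only [deg, deg_under] at hdeg this
      obtain rfl : dl = leaf := deg_eq_zero_iff.mp (by omega)
      obtain rfl : tr = leaf := deg_eq_zero_iff.mp (by omega)
      simp [hdr]

def dropRightmost : PBT → PBT
  | leaf => leaf
  | node a leaf => a
  | node a (node b c) => node a (dropRightmost (node b c))

lemma dropRightmost_mono {u v : PBT} (h : tle u v) : tle (dropRightmost u) (dropRightmost v) := by
  induction h with
  | refl => exact .refl _
  | trans _ _ ih₁ ih₂ => exact ih₁.trans ih₂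
  | rotate _ _ r =>
    cases r with
    | leaf => exact .refl _
    | node => exact .rotate _ _ _
  | node_left z h =>
    cases z with
    | leaf => exact h
    | node => exact .node_left _ h
  | @node_right x y _ h ih =>
    cases x with
    | leaf =>
      obtain rfl : y = leaf := deg_eq_zero_iff.mp h.deg_eq.symm
      exact .refl _
    | node =>
      cases y with
      | leaf => have := h.deg_eq; simp [deg] at this
      | node => exact .node_right _ ih

lemma dropRightmost_under_node_leaf (x c : PBT) :
    dropRightmost (under x (node c leaf)) = under x c := by
  induction x with
  | leaf => rfl
  | node a b _ ih =>
    rw [under, under, ← ih]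
    cases hb : under b (node c leaf) with
    | leaf => simp [← deg_eq_zero_iff, deg] at hb
    | node => rfl

lemma tle_of_node_leaf_tle_node_leaf {a b : PBT} (h : tle (node leaf a) (node leaf b)) :
    tle a b := by
  simpa [σ, dropRightmost] using dropRightmost_mono h.σ

lemma σ_mem_sum {x y z : PBT} : σ z ∈ sum (σ y) (σ x) ↔ z ∈ sum x y := by
  change tle _ _ ∧ tle _ _ ↔ tle _ _ ∧ tle _ _
  rw [← σ_under, ← σ_pover, σ_tle_σ_iff, σ_tle_σ_iff, and_comm]

lemma sum_eq_singleton {x y : PBT} (h : pover x y = under x y) : sum x y = {under x y} := by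
  ext z
  refine ⟨fun hz => hz.2.antisymm (h ▸ hz.1), ?_⟩
  rintro rfl
  exact ⟨h ▸ .refl _, .refl _⟩

lemma sum_leaf (x : PBT) : sum x leaf = {x} := by
  simpa using sum_eq_singleton (x := x) (y := leaf) (by simp)

lemma leaf_sum (y : PBT) : sum leaf y = {y} := by
  simpa using sum_eq_singleton (x := leaf) (y := y) (by simp)

lemma ne_leaf_of_mem_sum {x y z : PBT} (h : z ∈ sum x y) (hx : x ≠ leaf) : z ≠ leaf := by
  rintro rfl
  have := h.1.deg_eq
  simp_all [deg]

lemma lsum_node_left (xl xr y : PBT) : lsum (node xl xr) y = node xl '' sum xr y := by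
  cases y with
  | leaf => simp [lsum, sum_leaf]
  | node => rfl

lemma rsum_node_right (x yl yr : PBT) : rsum x (node yl yr) = (node · yr) '' sum x yl := by
  cases x with
  | leaf => simp [rsum, leaf_sum]
  | node => rfl

lemma pover_node_tle (xl xr y : PBT) : tle (pover (node xl xr) y) (node xl (pover xr y)) := by
  induction y with
  | leaf => exact .refl _
  | node _ yr ih _ => exact (tle.node_left yr ih).trans (.rotate _ _ _)

lemma node_under_tle (x yl yr : PBT) : tle (node (under x yl) yr) (under x (node yl yr)) := by
  induction x with
  | leaf => exact .refl _
  | node xl _ _ ih => exact (tle.rotate _ _ _).trans (.node_right xl ih)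

lemma lsum_subset_sum {x : PBT} (y : PBT) (hx : x ≠ leaf) : lsum x y ⊆ sum x y := by
  obtain _ | ⟨xl, xr⟩ := x
  · exact absurd rfl hx
  rw [lsum_node_left]
  rintro _ ⟨w, ⟨hlow, hup⟩, rfl⟩
  exact ⟨(pover_node_tle xl xr y).trans (.node_right xl hlow), .node_right xl hup⟩

lemma rsum_subset_sum (x : PBT) {y : PBT} (hy : y ≠ leaf) : rsum x y ⊆ sum x y := by
  obtain _ | ⟨yl, yr⟩ := y
  · exact absurd rfl hy
  rw [rsum_node_right]
  rintro _ ⟨w, ⟨hlow, hup⟩, rfl⟩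
  exact ⟨.node_left yr hlow, (tle.node_left yr hup).trans (node_under_tle x yl yr)⟩

lemma node_mem_rsum_of_mem_sum {x y zl zr : PBT} (hz : node zl zr ∈ sum x y)
    (hdeg : deg x ≤ deg zl) : node zl zr ∈ rsum x y := by
  obtain ⟨hlow, hup⟩ := hz
  obtain ⟨c, d, hcd, hc, hd⟩ := exists_pover_of_tle_pover (p := zl) (q := node leaf zr) hlow
  obtain ⟨t, s, hts, ht, hs⟩ := exists_under_of_under_tle (a := node zl leaf) (b := zr) hup
  have hdeg_c := hc.deg_eq
  have hdeg_d : deg d = deg zr + 1 := by simpa [deg] using hd.deg_eq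
  have hdeg_t : deg t = deg zl + 1 := by simpa [deg] using ht.deg_eq.symm
  have hdeg_s := hs.deg_eq
  obtain ⟨e, rfl, rfl⟩ := exists_pover_of_pover_eq_pover hcd (by omega)
  obtain ⟨w, rfl, hw⟩ := exists_under_of_under_eq_under hts (by omega)
  obtain ⟨rfl, rfl⟩ := pover_eq_under_of_deg_eq hw (by omega)
  obtain rfl : zr = s := hs.antisymm (tle_of_node_leaf_tle_node_leaf hd)
  rw [pover, pover_leaf, rsum_node_right]
  have hzl : tle zl (under x e) := by
    simpa [dropRightmost, dropRightmost_under_node_leaf] using dropRightmost_mono ht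
  exact ⟨zl, ⟨hc, hzl⟩, rfl⟩

lemma node_mem_lsum_of_mem_sum {x y zl zr : PBT} (hz : node zl zr ∈ sum x y)
    (hdeg : deg y ≤ deg zr) : node zl zr ∈ lsum x y := by
  have hσ := node_mem_rsum_of_mem_sum (x := σ y) (y := σ x) (zl := σ zr) (zr := σ zl)
    (σ_mem_sum.2 hz) (by simpa using hdeg)
  obtain _ | ⟨xl, xr⟩ := x
  · rw [leaf_sum] at hz
    obtain rfl : node zl zr = y := hz
    simp [deg] at hdeg
  rw [σ, rsum_node_right] at hσ
  obtain ⟨w, hw, hwz⟩ := hσ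
  obtain ⟨rfl, hzl⟩ := node.inj hwz
  rw [lsum_node_left, σ_injective hzl]
  exact ⟨zr, σ_mem_sum.1 hw, rfl⟩

theorem sum_eq_lsum_union_rsum {x y : PBT} (hx : x ≠ leaf) (hy : y ≠ leaf) :
    sum x y = lsum x y ∪ rsum x y := by
  refine subset_antisymm ?_ (Set.union_subset (lsum_subset_sum y hx) (rsum_subset_sum x hy))
  rintro (_ | ⟨zl, zr⟩) hz
  · exact absurd rfl (ne_leaf_of_mem_sum hz hx)
  have hdeg : deg x + deg y = deg zl + deg zr + 1 := by simpa [deg] using hz.1.deg_eq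
  rcases le_or_gt (deg x) (deg zl) with h | h
  · exact Or.inr (node_mem_rsum_of_mem_sum hz h)
  · exact Or.inl (node_mem_lsum_of_mem_sum hz (by omega))

lemma biUnion_lsum_lsum_of_assoc {xl xr y c : PBT}
    (hassoc : ⋃ t ∈ sum xr y, sum t c = ⋃ w ∈ sum y c, sum xr w) :
    ⋃ u ∈ lsum (node xl xr) y, lsum u c = ⋃ w ∈ sum y c, lsum (node xl xr) w := by
  simp only [lsum_node_left, Set.biUnion_image, ← Set.image_iUnion₂, hassoc]

lemma biUnion_rsum_lsum (x : PBT) {y : PBT} (hy : y ≠ leaf) (c : PBT) :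
    ⋃ u ∈ rsum x y, lsum u c = ⋃ v ∈ lsum y c, rsum x v := by
  obtain _ | ⟨yl, yr⟩ := y
  · exact absurd rfl hy
  simp only [rsum_node_right, lsum_node_left, Set.biUnion_image, Set.iUnion_image_left]
  exact Set.image2_swap _ _ _

lemma biUnion_sum_rsum_of_assoc {x y cl cr : PBT}
    (hassoc : ⋃ t ∈ sum x y, sum t cl = ⋃ w ∈ sum y cl, sum x w) :
    ⋃ t ∈ sum x y, rsum t (node cl cr) = ⋃ v ∈ rsum y (node cl cr), rsum x v := by
  simp only [rsum_node_right, Set.biUnion_image, ← Set.image_iUnion₂, hassoc]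

lemma sum_assoc_of_lsum_of_rsum {x y z : PBT} (hx : x ≠ leaf) (hy : y ≠ leaf) (hz : z ≠ leaf)
    (hl : ⋃ u ∈ lsum x y, lsum u z = ⋃ w ∈ sum y z, lsum x w)
    (hr : ⋃ t ∈ sum x y, rsum t z = ⋃ v ∈ rsum y z, rsum x v) :
    ⋃ t ∈ sum x y, sum t z = ⋃ w ∈ sum y z, sum x w := by
  have hsplit_left : ∀ t ∈ sum x y, sum t z = lsum t z ∪ rsum t z := fun t ht =>
    sum_eq_lsum_union_rsum (ne_leaf_of_mem_sum ht hx) hz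
  have hsplit_right : ∀ w ∈ sum y z, sum x w = lsum x w ∪ rsum x w := fun w hw =>
    sum_eq_lsum_union_rsum hx (ne_leaf_of_mem_sum hw hy)
  calc ⋃ t ∈ sum x y, sum t z
      = (⋃ t ∈ sum x y, lsum t z) ∪ ⋃ t ∈ sum x y, rsum t z := by
        rw [Set.iUnion₂_congr hsplit_left]
        simp only [Set.iUnion_union_distrib]
    _ = ((⋃ u ∈ lsum x y, lsum u z) ∪ ⋃ u ∈ rsum x y, lsum u z) ∪
          ⋃ t ∈ sum x y, rsum t z := by
        rw [← Set.biUnion_union, ← sum_eq_lsum_union_rsum hx hy]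
    _ = ((⋃ w ∈ sum y z, lsum x w) ∪ ⋃ v ∈ lsum y z, rsum x v) ∪ ⋃ v ∈ rsum y z, rsum x v := by
        rw [hl, biUnion_rsum_lsum x hy z, hr]
    _ = (⋃ w ∈ sum y z, lsum x w) ∪ ⋃ w ∈ sum y z, rsum x w := by
        rw [Set.union_assoc, ← Set.biUnion_union, ← sum_eq_lsum_union_rsum hy hz]
    _ = ⋃ w ∈ sum y z, sum x w := by
        rw [Set.iUnion₂_congr hsplit_right]
        simp only [Set.iUnion_union_distrib]

theorem sum_assoc : ∀ x y z : PBT, ⋃ t ∈ sum x y, sum t z = ⋃ w ∈ sum y z, sum x w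
  | leaf, y, z => by simp [leaf_sum]
  | x, leaf, z => by simp [leaf_sum, sum_leaf]
  | x, y, leaf => by simp [sum_leaf]
  | node xl xr, node yl yr, node zl zr =>
    sum_assoc_of_lsum_of_rsum (by simp) (by simp) (by simp)
      (biUnion_lsum_lsum_of_assoc (sum_assoc xr _ _))
      (biUnion_sum_rsum_of_assoc (sum_assoc _ _ zl))
termination_by x _ z => (x, z)

theorem biUnion_lsum_lsum {x : PBT} (hx : x ≠ leaf) (y c : PBT) :
    ⋃ u ∈ lsum x y, lsum u c = ⋃ w ∈ sum y c, lsum x w := by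
  obtain _ | ⟨xl, xr⟩ := x
  · exact absurd rfl hx
  exact biUnion_lsum_lsum_of_assoc (sum_assoc xr y c)

theorem biUnion_sum_rsum (x y : PBT) {c : PBT} (hc : c ≠ leaf) :
    ⋃ t ∈ sum x y, rsum t c = ⋃ v ∈ rsum y c, rsum x v := by
  obtain _ | ⟨cl, cr⟩ := c
  · exact absurd rfl hc
  exact biUnion_sum_rsum_of_assoc (sum_assoc x y cl)

lemma Grove.ne_leaf {n : ℕ} {A : Set PBT} (hA : Grove n A) (hn : 0 < n) : ∀ x ∈ A, x ≠ leaf :=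
  fun x hx => ne_leaf_of_deg_pos (hA.2 x hx ▸ hn)

end PBT

open PBT in
/-- the dendriform relations for groves of positive degree. -/
theorem grove_dendriform (n m p : ℕ) (hn : 0 < n) (hm : 0 < m) (hp : 0 < p)
    (A B C : Set PBT) (hA : Grove n A) (hB : Grove m B) (hC : Grove p C) :
    glsum (glsum A B) C = glsum A (gsum B C) ∧
    glsum (grsum A B) C = grsum A (glsum B C) ∧
    grsum (gsum A B) C = grsum A (grsum B C) :=
  ⟨Set.biUnion_biUnion_eq_of_forall fun x hx y _ c _ => biUnion_lsum_lsum (hA.ne_leaf hn x hx) y c,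
    Set.biUnion_biUnion_eq_of_forall fun x _ y hy c _ => biUnion_rsum_lsum x (hB.ne_leaf hm y hy) c,
    Set.biUnion_biUnion_eq_of_forall fun x _ y _ c hc => biUnion_sum_rsum x y (hC.ne_leaf hp c hc)⟩
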